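/- Let k be an algebraically closed field, U an associative unital k-algebra, and B, B' ⊆ U subalgebras. Let M be a finite-dimensional simple U-module with action ρ_M : U → End_k(M), V a finite-dimensional B-module with action ρ_V, and W a finite-dimensional B'-module with action ρ_W. For F ∈ Hom_k(M, V) ⊗_k Hom_k(W, M) let Φ_F : U → Hom_k(W, V) be the k-linear map determined on pure tensors by Φ_{p ⊗ j}(x) = p ∘ ρ_M(x) ∘ j. If Φ_F(b x b') = ρ_V(b) ∘ Φ_F(x) ∘ ρ_W(b') for all b ∈ B, x ∈ U, b' ∈ B', then F lies in the image of the canonical injection Hom_B(M, V) ⊗_k Hom_{B'}(W, M) → Hom_k(M, V) ⊗_k Hom_k(W, M); that is, F can be written as a finite sum Σᵢ pᵢ ⊗ jᵢ with each pᵢ : M → V a B-module map and each jᵢ : W → M a B'-module map. -/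

import Mathlib

open TensorProduct Module

/-- The matrix-spherical function `Φ_F(x)` attached to
`F ∈ Hom_k(M, V) ⊗ Hom_k(W, M)`, determined on pure tensors by
`Φ_{p ⊗ j}(x) = p ∘ ρ_M(x) ∘ j`. -/
noncomputable def msfOfTensor {k U M V W : Type*} [Field k] [Ring U] [Algebra k U]
    [AddCommGroup M] [Module k M] [AddCommGroup V] [Module k V]
    [AddCommGroup W] [Module k W]
    (ρM : U →ₐ[k] Module.End k M)
    (F : (M →ₗ[k] V) ⊗[k] (W →ₗ[k] M)) (x : U) : W →ₗ[k] V :=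
  TensorProduct.lift
    ((LinearMap.llcomp k W M V) ∘ₗ (LinearMap.lcomp k V (ρM x))) F

set_option linter.unusedVariables false

section Core
variable {k : Type*} [Field k] {M V W : Type*}
  [AddCommGroup M] [Module k M] [AddCommGroup V] [Module k V]
  [AddCommGroup W] [Module k W]

/-- If `e i : W →ₗ M` are linearly independent and `∑ i, q i ∘ T ∘ e i = 0` for all
endomorphisms `T` of `M`, then each `q i = 0`. -/
lemma core_left {ι : Type*} [Fintype ι] (e : ι → (W →ₗ[k] M)) (he : LinearIndependent k e)
    (q : ι → (M →ₗ[k] V))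
    (h : ∀ T : Module.End k M, ∑ i, (q i) ∘ₗ T ∘ₗ (e i) = 0) :
    ∀ i, q i = 0 := by
  intro i₀
  ext m
  show (q i₀) m = (0:M →ₗ[k] V) m
  rw [LinearMap.zero_apply, ← Module.forall_dual_apply_eq_zero_iff k (q i₀ m)]
  intro ℓ
  have key : ∀ w : W, (∑ i, ℓ (q i m) • e i) w = 0 := by
    intro w
    rw [← Module.forall_dual_apply_eq_zero_iff k ((∑ i, ℓ (q i m) • e i) w)]
    intro f
    have h1 := congrArg (fun (g : W →ₗ[k] V) => ℓ (g w)) (h (f.smulRight m))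
    simp only [LinearMap.sum_apply, LinearMap.comp_apply, LinearMap.smulRight_apply,
      map_smul, map_sum, LinearMap.zero_apply, map_zero] at h1
    simpa [mul_comm] using h1
  have h0 : ∑ i, ℓ (q i m) • e i = 0 := by ext w; simpa using key w
  have := (Fintype.linearIndependent_iff.1 he) (fun i => ℓ (q i m)) h0
  exact this i₀

lemma core_right {ι : Type*} [Fintype ι] (e : ι → (M →ₗ[k] V)) (he : LinearIndependent k e)
    (u : ι → (W →ₗ[k] M))
    (h : ∀ T : Module.End k M, ∑ i, (e i) ∘ₗ T ∘ₗ (u i) = 0) :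
    ∀ i, u i = 0 := by
  intro i₀
  ext w
  show (u i₀) w = (0:W →ₗ[k] M) w
  rw [LinearMap.zero_apply, ← Module.forall_dual_apply_eq_zero_iff k (u i₀ w)]
  intro f
  have h0 : ∑ i, f (u i w) • e i = 0 := by
    ext m
    have h1 := congrArg (fun (g : W →ₗ[k] V) => g w) (h (f.smulRight m))
    simpa using h1
  exact (Fintype.linearIndependent_iff.1 he) (fun i => f (u i w)) h0 i₀
end Core

section Decomp
variable {k : Type*} [Field k] {X Y : Type*}
  [AddCommGroup X] [Module k X] [AddCommGroup Y] [Module k Y]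

/-- Right-coordinate projection of a tensor w.r.t. a basis of `Y`. -/
noncomputable def rcoord {ι : Type*} (bY : Basis ι k Y) (i : ι) :
    X ⊗[k] Y →ₗ[k] X :=
  (TensorProduct.rid k X).toLinearMap ∘ₗ
    (TensorProduct.map LinearMap.id (bY.coord i))

@[simp] lemma rcoord_tmul {ι : Type*} (bY : Basis ι k Y) (i : ι) (p : X) (j : Y) :
    rcoord bY i (p ⊗ₜ[k] j) = bY.coord i j • p := by
  simp [rcoord, TensorProduct.rid_tmul, TensorProduct.smul_tmul']

lemma tensor_decomp_right {ι : Type*} [Fintype ι] (bY : Basis ι k Y)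
    (F : X ⊗[k] Y) : F = ∑ i, (rcoord bY i F) ⊗ₜ[k] bY i := by
  induction F using TensorProduct.induction_on with
  | zero => simp
  | tmul p j =>
      simp only [rcoord_tmul]
      calc p ⊗ₜ[k] j = p ⊗ₜ[k] (∑ i, bY.repr j i • bY i) := by rw [bY.sum_repr j]
        _ = ∑ i, ((bY.coord i) j • p) ⊗ₜ[k] bY i := by
            rw [TensorProduct.tmul_sum]
            exact Finset.sum_congr rfl fun i _ => by
              rw [TensorProduct.tmul_smul, TensorProduct.smul_tmul', Basis.coord_apply]
  | add F G hF hG =>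
      conv_lhs => rw [hF, hG]
      simp [map_add, TensorProduct.add_tmul, Finset.sum_add_distrib]
end Decomp

set_option linter.unusedSectionVars false
section Burnside
variable {k U M : Type*} [Field k] [IsAlgClosed k] [Ring U] [Algebra k U]
  [AddCommGroup M] [Module k M] [FiniteDimensional k M]

variable (ρM : U →ₐ[k] Module.End k M)

/-- transitivity: the orbit of a nonzero vector is everything. -/
lemma msf_exists_apply_eq (hM_nontrivial : Nontrivial M)
    (hM_simple : ∀ N : Submodule k M, (∀ x : U, ∀ m ∈ N, ρM x m ∈ N) → N = ⊥ ∨ N = ⊤)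
    {m : M} (hm : m ≠ 0) (m' : M) : ∃ x : U, ρM x m = m' := by
  let N : Submodule k M :=
    { carrier := Set.range (fun x : U => ρM x m)
      add_mem' := by
        rintro _ _ ⟨x, rfl⟩ ⟨y, rfl⟩
        exact ⟨x + y, by simp⟩
      zero_mem' := ⟨0, by simp⟩
      smul_mem' := by
        rintro c _ ⟨x, rfl⟩
        exact ⟨c • x, by simp⟩ }
  have hstable : ∀ x : U, ∀ n ∈ N, ρM x n ∈ N := by
    rintro x _ ⟨y, rfl⟩
    exact ⟨x * y, by simp [Module.End.mul_apply]⟩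
  rcases hM_simple N hstable with hbot | htop
  · exfalso
    have : m ∈ N := ⟨1, by simp⟩
    rw [hbot] at this
    exact hm (by simpa using this)
  · have : m' ∈ N := htop ▸ Submodule.mem_top
    exact this


/-- a rank-one map is `f.smulRight m₀`. -/
lemma rank_one_structure {a : Module.End k M} (ha : finrank k (LinearMap.range a) = 1) :
    ∃ (f : Module.Dual k M) (m₀ : M), m₀ ≠ 0 ∧ a = f.smulRight m₀ := by
  classical
  let Wa := LinearMap.range a
  let b : Basis (Fin 1) k Wa := Module.finBasisOfFinrankEq k Wa ha
  set m₀ : M := (b 0 : M) with hm₀def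
  have hm₀ : m₀ ≠ 0 := by
    intro h
    have : (b 0 : Wa) = 0 := Subtype.ext (by simpa [hm₀def] using h)
    exact b.ne_zero 0 this
  have hspan : Wa = Submodule.span k {m₀} := by
    have htop : Submodule.span k (Set.range b) = (⊤ : Submodule k Wa) := b.span_eq
    have : Wa = Submodule.map Wa.subtype ⊤ := by
      rw [Submodule.map_top, Submodule.range_subtype]
    rw [this, ← htop, Submodule.map_span]
    congr 1
    ext z
    constructor
    · rintro ⟨_, ⟨i, rfl⟩, rfl⟩
      rw [Subsingleton.elim i 0]
      exact rfl
    · rintro rfl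
      exact ⟨b 0, ⟨0, rfl⟩, rfl⟩
  have hmem : ∀ m : M, a m ∈ Submodule.span k {m₀} := fun m => hspan ▸ LinearMap.mem_range_self a m
  let φ := LinearEquiv.toSpanNonzeroSingleton k M m₀ hm₀
  let f : Module.Dual k M := φ.symm.toLinearMap ∘ₗ a.codRestrict (Submodule.span k {m₀}) hmem
  refine ⟨f, m₀, hm₀, ?_⟩
  ext m
  have h1 : φ (f m) = a.codRestrict (Submodule.span k {m₀}) hmem m := φ.apply_symm_apply _
  have h2 : (φ (f m) : M) = f m • m₀ := by
    rw [LinearEquiv.toSpanNonzeroSingleton_apply]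
  have := congrArg (Subtype.val) h1
  rw [h2] at this
  simpa [eq_comm] using this

/-- **Burnside**: the image of an irreducible representation is all of `End k M`. -/
lemma msf_burnside (hM_nontrivial : Nontrivial M)
    (hM_simple : ∀ N : Submodule k M, (∀ x : U, ∀ m ∈ N, ρM x m ∈ N) → N = ⊥ ∨ N = ⊤) :
    Function.Surjective ρM := by
  classical
  -- the set of ranks of nonzero elements of the image
  let S : Set ℕ := {n | ∃ x : U, ρM x ≠ 0 ∧ finrank k (LinearMap.range (ρM x)) = n}
  have hSne : S.Nonempty := by
    refine ⟨_, 1, ?_, rfl⟩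
    intro h
    obtain ⟨m, hm⟩ := exists_ne (0 : M)
    have : (ρM 1) m = 0 := by rw [h]; rfl
    rw [map_one] at this
    exact hm (by simpa using this)
  obtain ⟨x₀, ha0, harank⟩ := Nat.sInf_mem hSne
  set a := ρM x₀ with ha_def
  set n₀ := sInf S with hn₀
  -- minimal rank is 1
  have hn₀_pos : 0 < n₀ := by
    rcases Nat.eq_zero_or_pos n₀ with h | h
    · exfalso
      rw [h] at harank
      have : LinearMap.range a = ⊥ := Submodule.finrank_eq_zero.mp harank
      exact ha0 (LinearMap.range_eq_bot.mp this)
    · exact h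
  have hrank1 : finrank k (LinearMap.range a) = 1 := by
    rw [harank]
    by_contra hne
    have h2 : 2 ≤ n₀ := by omega
    -- find m₁, m₂ with a m₂ not a multiple of a m₁
    obtain ⟨m₁, hm₁⟩ : ∃ m₁, a m₁ ≠ 0 := by
      by_contra h
      push_neg at h
      exact ha0 (LinearMap.ext h)
    obtain ⟨m₂, hm₂⟩ : ∃ m₂, ∀ c : k, a m₂ ≠ c • a m₁ := by
      by_contra h
      push_neg at h
      have hle : LinearMap.range a ≤ Submodule.span k {a m₁} := by
        rintro _ ⟨m, rfl⟩
        obtain ⟨c, hc⟩ := h m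
        rw [hc]
        exact Submodule.smul_mem _ _ (Submodule.mem_span_singleton_self _)
      have := Submodule.finrank_mono hle
      rw [harank, finrank_span_singleton hm₁] at this
      omega
    -- pick y with ρM y (a m₁) = m₂
    obtain ⟨y, hy⟩ := msf_exists_apply_eq ρM hM_nontrivial hM_simple hm₁ m₂
    -- the endomorphism s of W := range a
    set Wa := LinearMap.range a with hWa
    have hmaps : ∀ w ∈ Wa, (a ∘ₗ ρM y) w ∈ Wa := fun w _ => LinearMap.mem_range_self a _
    set s : Wa →ₗ[k] Wa := (a ∘ₗ ρM y).restrict hmaps with hs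
    haveI : Nontrivial Wa := by
      apply Submodule.nontrivial_iff_ne_bot.mpr
      intro h
      have hmem := LinearMap.mem_range_self a m₁
      rw [← hWa, h, Submodule.mem_bot] at hmem
      exact hm₁ hmem
    obtain ⟨c, hc⟩ := Module.End.exists_eigenvalue s
    obtain ⟨w, hw_eig, hw0⟩ := hc.exists_hasEigenvector
    have hsw : s w = c • w := Module.End.mem_eigenspace_iff.mp hw_eig
    -- the new element a' = a ∘ ρ y ∘ a - c • a
    set x' := x₀ * y * x₀ - c • x₀ with hx'
    set a' := ρM x' with ha'
    have ha'_eq : a' = (a ∘ₗ ρM y - c • LinearMap.id) ∘ₗ a := by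
      ext m
      simp [ha', hx', map_sub, map_mul, map_smul, ha_def, Module.End.mul_apply,
        LinearMap.sub_apply, LinearMap.smul_apply]
    set g : Module.End k M := a ∘ₗ ρM y - c • LinearMap.id with hg
    set t : Wa →ₗ[k] Wa := s - c • LinearMap.id with ht
    -- a' ≠ 0
    have ha'0 : a' ≠ 0 := by
      intro h
      have : a' m₁ = 0 := by rw [h]; rfl
      rw [ha'_eq] at this
      simp only [LinearMap.comp_apply, LinearMap.sub_apply, LinearMap.smul_apply,
        LinearMap.id_apply, hg] at this
      have : a (ρM y (a m₁)) = c • a m₁ := by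
        rw [sub_eq_zero] at this
        simpa using this
      rw [hy] at this
      exact hm₂ c this
    -- rank of a' is < n₀
    have hker : LinearMap.ker t ≠ ⊥ := by
      intro h
      have : t w = 0 := by
        rw [ht]
        simp only [LinearMap.sub_apply, LinearMap.smul_apply, LinearMap.id_apply]
        rw [hsw, sub_self]
      rw [← LinearMap.mem_ker, h, Submodule.mem_bot] at this
      exact hw0 this
    have hrangemap : LinearMap.range a' = Submodule.map Wa.subtype (LinearMap.range t) := by
      rw [ha'_eq, LinearMap.range_comp]
      ext z
      constructor
      · intro hz
        rw [Submodule.mem_map] at hz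
        obtain ⟨v, hv, rfl⟩ := hz
        refine Submodule.mem_map.mpr ⟨t ⟨v, hv⟩, LinearMap.mem_range_self t _, ?_⟩
        simp [ht, hs, hg, LinearMap.restrict_apply]
      · intro hz
        rw [Submodule.mem_map] at hz
        obtain ⟨w', hw', rfl⟩ := hz
        rw [LinearMap.mem_range] at hw'
        obtain ⟨w'', rfl⟩ := hw'
        refine Submodule.mem_map.mpr ⟨(w'' : M), w''.2, ?_⟩
        simp [ht, hs, hg, LinearMap.restrict_apply]
    have hfr : finrank k (LinearMap.range a') < n₀ := by
      rw [hrangemap, Submodule.finrank_map_subtype_eq]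
      have h1 : finrank k (LinearMap.range t) + finrank k (LinearMap.ker t) = finrank k Wa :=
        LinearMap.finrank_range_add_finrank_ker t
      have h2 : 0 < finrank k (LinearMap.ker t) := by
        rcases Nat.eq_zero_or_pos (finrank k (LinearMap.ker t)) with h | h
        · exact absurd (Submodule.finrank_eq_zero.mp h) hker
        · exact h
      have h3 : finrank k Wa = n₀ := harank
      omega
    have : n₀ ≤ finrank k (LinearMap.range a') :=
      Nat.sInf_le ⟨x', ha'0, rfl⟩
    omega
  -- now a = f.smulRight m₀ is rank one
  obtain ⟨f, m₀, hm₀, hafm⟩ := rank_one_structure (a := a) hrank1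
  have hf0 : ∃ m', f m' ≠ 0 := by
    by_contra h
    push_neg at h
    apply ha0
    ext m
    rw [hafm]
    simp [h m]
  -- E := the image of ρM as a subspace of End k M
  set E : Submodule k (Module.End k M) := LinearMap.range ρM.toLinearMap with hE
  -- the subspace of functionals g with all g.smulRight v ∈ E
  let E' : Submodule k (Module.Dual k M) :=
    { carrier := {g | ∀ v : M, g.smulRight v ∈ E}
      add_mem' := by
        intro g g' hg hg' v
        have : (g + g').smulRight v = g.smulRight v + g'.smulRight v := by
          ext m; simp [add_smul]
        rw [this]
        exact add_mem (hg v) (hg' v)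
      zero_mem' := by
        intro v
        have : (0 : Module.Dual k M).smulRight v = 0 := by ext m; simp
        rw [this]
        exact zero_mem E
      smul_mem' := by
        intro c g hg v
        have : (c • g).smulRight v = c • (g.smulRight v) := by ext m; simp [smul_smul]
        rw [this]
        exact Submodule.smul_mem _ _ (hg v) }
  -- the subspace D of functionals of the form f ∘ ρM y
  let β : U →ₗ[k] Module.Dual k M :=
    { toFun := fun y => f ∘ₗ (ρM y : M →ₗ[k] M)
      map_add' := by intro y z; ext m; simp
      map_smul' := by intro c y; ext m; simp }
  set D : Submodule k (Module.Dual k M) := LinearMap.range β with hD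
  -- D = ⊤ via the annihilator machinery
  have hDcoann : D.dualCoannihilator = ⊥ := by
    -- the coannihilator is a stable submodule avoided by some m'
    have hsub : ∀ m ∈ D.dualCoannihilator, ∀ y : U, f (ρM y m) = 0 := by
      intro m hm y
      have := (Submodule.mem_dualCoannihilator m).mp hm (β y) ⟨y, rfl⟩
      exact this
    have hstab : ∀ x : U, ∀ m ∈ D.dualCoannihilator, ρM x m ∈ D.dualCoannihilator := by
      intro x m hm
      rw [Submodule.mem_dualCoannihilator]
      rintro _ ⟨y, rfl⟩
      have := hsub m hm (y * x)
      simp only [map_mul, Module.End.mul_apply] at this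
      exact this
    rcases hM_simple D.dualCoannihilator hstab with h | h
    · exact h
    · exfalso
      obtain ⟨m', hm'⟩ := hf0
      have : m' ∈ D.dualCoannihilator := h ▸ Submodule.mem_top
      have := hsub m' this 1
      rw [map_one] at this
      exact hm' (by simpa using this)
  have hDtop : D = ⊤ := by
    have := Subspace.dualCoannihilator_dualAnnihilator_eq (W := D)
    rw [hDcoann, Submodule.dualAnnihilator_bot] at this
    exact this.symm
  -- D ≤ E'
  have hDE' : D ≤ E' := by
    rintro _ ⟨y, rfl⟩
    intro v
    obtain ⟨x, hx⟩ := msf_exists_apply_eq ρM hM_nontrivial hM_simple hm₀ v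
    refine ⟨x * x₀ * y, ?_⟩
    ext m
    simp only [AlgHom.toLinearMap_apply, map_mul, Module.End.mul_apply]
    rw [← ha_def, hafm]
    simp only [LinearMap.smulRight_apply, map_smul, hx]
    rfl
  have hE'top : E' = ⊤ := top_unique (hDtop ▸ hDE')
  -- every endomorphism lies in E
  have hEtop : E = ⊤ := by
    rw [eq_top_iff]
    intro T _
    have hT : T = ∑ i, ((Module.finBasis k M).coord i).smulRight (T (Module.finBasis k M i)) := by
      ext m
      simp only [LinearMap.sum_apply, LinearMap.smulRight_apply]
      calc T m = T (∑ i, (Module.finBasis k M).repr m i • (Module.finBasis k M) i) := by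
            rw [Basis.sum_repr]
        _ = ∑ i, ((Module.finBasis k M).coord i) m • T ((Module.finBasis k M) i) := by
            rw [map_sum]
            exact Finset.sum_congr rfl fun i _ => by rw [map_smul]; rfl
    rw [hT]
    apply Submodule.sum_mem
    intro i _
    have : ((Module.finBasis k M).coord i) ∈ E' := hE'top ▸ Submodule.mem_top
    exact this _
  intro T
  have : T ∈ E := hEtop ▸ Submodule.mem_top
  obtain ⟨x, hx⟩ := this
  exact ⟨x, hx⟩

end Burnside

set_option maxHeartbeats 1000000 in
/-- Over an algebraically closed field, if `M` is a finite-dimensional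
simple `U`-module and `F ∈ Hom_k(M, V) ⊗ Hom_k(W, M)` gives rise to a matrix-spherical
function `Φ_F`, then `F` is a finite sum `Σᵢ pᵢ ⊗ jᵢ` with each `pᵢ : M → V`
`B`-linear and each `jᵢ : W → M` `B'`-linear. -/
theorem msf_of_simple_is_elementary
    (k : Type*) [Field k] [IsAlgClosed k]
    (U M V W : Type*) [Ring U] [Algebra k U]
    [AddCommGroup M] [Module k M] [FiniteDimensional k M]
    [AddCommGroup V] [Module k V] [FiniteDimensional k V]
    [AddCommGroup W] [Module k W] [FiniteDimensional k W]
    (B B' : Subalgebra k U)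
    (ρM : U →ₐ[k] Module.End k M)
    (ρV : B →ₐ[k] Module.End k V) (ρW : B' →ₐ[k] Module.End k W)
    (hM_nontrivial : Nontrivial M)
    (hM_simple : ∀ N : Submodule k M, (∀ x : U, ∀ m ∈ N, ρM x m ∈ N) → N = ⊥ ∨ N = ⊤)
    (F : (M →ₗ[k] V) ⊗[k] (W →ₗ[k] M))
    (hF : ∀ (b : B) (x : U) (b' : B'),
      msfOfTensor ρM F ((b : U) * x * (b' : U)) =
        (ρV b) ∘ₗ (msfOfTensor ρM F x) ∘ₗ (ρW b')) :
    ∃ (n : ℕ) (p : Fin n → (M →ₗ[k] V)) (j : Fin n → (W →ₗ[k] M)),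
      (∀ (i : Fin n) (b : B), (p i) ∘ₗ (ρM (b : U)) = (ρV b) ∘ₗ (p i)) ∧
      (∀ (i : Fin n) (b' : B'), (j i) ∘ₗ (ρW b') = (ρM (b' : U)) ∘ₗ (j i)) ∧
      F = ∑ i, (p i) ⊗ₜ[k] (j i) := by
  classical
  have hsurj : Function.Surjective ρM := msf_burnside ρM hM_nontrivial hM_simple
  -- the matrix-spherical function as a function of an arbitrary endomorphism of M
  let Θ : Module.End k M → (((M →ₗ[k] V) ⊗[k] (W →ₗ[k] M)) →ₗ[k] (W →ₗ[k] V)) :=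
    fun T => TensorProduct.lift ((LinearMap.llcomp k W M V) ∘ₗ (LinearMap.lcomp k V T))
  have hΘ_tmul : ∀ (T : Module.End k M) (p : M →ₗ[k] V) (j : W →ₗ[k] M),
      Θ T (p ⊗ₜ[k] j) = p ∘ₗ T ∘ₗ j := by
    intro T p j
    ext w
    rfl
  have hmsf : ∀ x : U, msfOfTensor ρM F x = Θ (ρM x) F := fun x => rfl
  -- the two intertwining relations, for arbitrary endomorphisms
  have hL : ∀ (b : B) (T : Module.End k M), Θ (ρM (b : U) * T) F = ρV b ∘ₗ Θ T F := by
    intro b T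
    obtain ⟨x, rfl⟩ := hsurj T
    have h := hF b x 1
    simp only [OneMemClass.coe_one, mul_one, map_one, Module.End.one_eq_id,
      LinearMap.comp_id] at h
    rw [hmsf, hmsf, map_mul] at h
    exact h
  have hR : ∀ (b' : B') (T : Module.End k M), Θ (T * ρM (b' : U)) F = Θ T F ∘ₗ ρW b' := by
    intro b' T
    obtain ⟨x, rfl⟩ := hsurj T
    have h := hF 1 x b'
    simp only [OneMemClass.coe_one, one_mul, map_one, Module.End.one_eq_id,
      LinearMap.id_comp] at h
    rw [hmsf, hmsf, map_mul] at h
    exact h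
  -- Stage 1: decompose F along a basis of Hom(W, M)
  let bY : Basis (Fin (Module.finrank k (W →ₗ[k] M))) k (W →ₗ[k] M) := Module.finBasis k _
  let p0 : Fin (Module.finrank k (W →ₗ[k] M)) → (M →ₗ[k] V) := fun i => rcoord bY i F
  have hdecomp : F = ∑ i, p0 i ⊗ₜ[k] bY i := tensor_decomp_right bY F
  have hΘF : ∀ T : Module.End k M, Θ T F = ∑ i, p0 i ∘ₗ T ∘ₗ bY i := by
    intro T
    conv_lhs => rw [hdecomp]
    rw [map_sum]
    exact Finset.sum_congr rfl fun i _ => hΘ_tmul T (p0 i) (bY i)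
  -- each p0 i intertwines the B-actions
  have hK : ∀ (b : B) (i : Fin (Module.finrank k (W →ₗ[k] M))),
      p0 i ∘ₗ ρM (b : U) = ρV b ∘ₗ p0 i := by
    intro b
    have hzero : ∀ T : Module.End k M,
        ∑ i, (p0 i ∘ₗ ρM (b : U) - ρV b ∘ₗ p0 i) ∘ₗ T ∘ₗ bY i = 0 := by
      intro T
      have e1 : ∑ i, (p0 i ∘ₗ ρM (b : U)) ∘ₗ T ∘ₗ bY i = Θ (ρM (b : U) * T) F := by
        rw [hΘF]
        exact Finset.sum_congr rfl fun i _ => by ext w; rfl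
      have e2 : ∑ i, (ρV b ∘ₗ p0 i) ∘ₗ T ∘ₗ bY i = ρV b ∘ₗ Θ T F := by
        rw [hΘF]
        ext w
        simp [LinearMap.sum_apply, LinearMap.comp_apply, map_sum]
      simp only [LinearMap.sub_comp]
      rw [Finset.sum_sub_distrib, e1, e2, hL b T, sub_self]
    intro i
    have h := core_left (fun i => bY i) bY.linearIndependent
      (fun i => p0 i ∘ₗ ρM (b : U) - ρV b ∘ₗ p0 i) hzero i
    rwa [sub_eq_zero] at h
  -- Stage 2: the subspace of B-intertwiners
  let K : Submodule k (M →ₗ[k] V) :=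
    { carrier := {p | ∀ b : B, p ∘ₗ ρM (b : U) = ρV b ∘ₗ p}
      add_mem' := by
        intro p q hp hq b
        rw [LinearMap.add_comp, LinearMap.comp_add, hp b, hq b]
      zero_mem' := by
        intro b
        rw [LinearMap.zero_comp, LinearMap.comp_zero]
      smul_mem' := by
        intro c p hp b
        rw [LinearMap.smul_comp, LinearMap.comp_smul, hp b] }
  let n := Module.finrank k K
  let bK : Basis (Fin n) k K := Module.finBasis k K
  let pK : Fin (Module.finrank k (W →ₗ[k] M)) → K := fun i => ⟨p0 i, fun b => hK b i⟩
  let c : Fin (Module.finrank k (W →ₗ[k] M)) → Fin n → k := fun i s => bK.repr (pK i) s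
  let j0 : Fin n → (W →ₗ[k] M) := fun s => ∑ i, c i s • bY i
  have hF2 : F = ∑ s, ((bK s : M →ₗ[k] V)) ⊗ₜ[k] j0 s := by
    calc F = ∑ i, p0 i ⊗ₜ[k] bY i := hdecomp
      _ = ∑ i, ∑ s, c i s • ((bK s : M →ₗ[k] V) ⊗ₜ[k] bY i) := by
          refine Finset.sum_congr rfl fun i _ => ?_
          have hp0 : p0 i = ∑ s, c i s • (bK s : M →ₗ[k] V) := by
            have h := bK.sum_repr (pK i)
            have h2 := congrArg (Submodule.subtype K) h
            simp only [map_sum, map_smul, Submodule.coe_subtype] at h2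
            exact h2.symm
          rw [hp0, TensorProduct.sum_tmul]
          exact Finset.sum_congr rfl fun s _ => by
            rw [TensorProduct.smul_tmul']
      _ = ∑ s, ∑ i, c i s • ((bK s : M →ₗ[k] V) ⊗ₜ[k] bY i) := Finset.sum_comm
      _ = ∑ s, ((bK s : M →ₗ[k] V)) ⊗ₜ[k] j0 s := by
          refine Finset.sum_congr rfl fun s _ => ?_
          rw [TensorProduct.tmul_sum]
          exact Finset.sum_congr rfl fun i _ => by
            rw [TensorProduct.tmul_smul]
  have hΘF2 : ∀ T : Module.End k M, Θ T F = ∑ s, (bK s : M →ₗ[k] V) ∘ₗ T ∘ₗ j0 s := by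
    intro T
    conv_lhs => rw [hF2]
    rw [map_sum]
    exact Finset.sum_congr rfl fun s _ => hΘ_tmul T _ (j0 s)
  -- each j0 s intertwines the B'-actions
  have hli : LinearIndependent k (fun s => (bK s : M →ₗ[k] V)) :=
    bK.linearIndependent.map' K.subtype K.ker_subtype
  have hJ : ∀ (b' : B') (s : Fin n), j0 s ∘ₗ ρW b' = ρM (b' : U) ∘ₗ j0 s := by
    intro b'
    have hzero : ∀ T : Module.End k M,
        ∑ s, (bK s : M →ₗ[k] V) ∘ₗ T ∘ₗ (j0 s ∘ₗ ρW b' - ρM (b' : U) ∘ₗ j0 s) = 0 := by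
      intro T
      have e1 : ∑ s, (bK s : M →ₗ[k] V) ∘ₗ T ∘ₗ (j0 s ∘ₗ ρW b') = Θ T F ∘ₗ ρW b' := by
        rw [hΘF2]
        ext w
        simp [LinearMap.sum_apply, LinearMap.comp_apply]
      have e2 : ∑ s, (bK s : M →ₗ[k] V) ∘ₗ T ∘ₗ (ρM (b' : U) ∘ₗ j0 s) = Θ (T * ρM (b' : U)) F := by
        rw [hΘF2]
        exact Finset.sum_congr rfl fun s _ => by ext w; rfl
      have e3 : ∀ s, (bK s : M →ₗ[k] V) ∘ₗ T ∘ₗ (j0 s ∘ₗ ρW b' - ρM (b' : U) ∘ₗ j0 s) =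
          (bK s : M →ₗ[k] V) ∘ₗ T ∘ₗ (j0 s ∘ₗ ρW b') -
          (bK s : M →ₗ[k] V) ∘ₗ T ∘ₗ (ρM (b' : U) ∘ₗ j0 s) := by
        intro s
        rw [LinearMap.comp_sub, LinearMap.comp_sub]
      simp only [e3]
      rw [Finset.sum_sub_distrib, e1, e2, hR b' T, sub_self]
    intro s
    have h := core_right (fun s => (bK s : M →ₗ[k] V)) hli
      (fun s => j0 s ∘ₗ ρW b' - ρM (b' : U) ∘ₗ j0 s) hzero s
    rwa [sub_eq_zero] at h
  exact ⟨n, fun s => (bK s : M →ₗ[k] V), j0,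
    fun s b => (bK s).2 b, fun s b' => hJ b' s, hF2⟩
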